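/- arXiv:2109.04225 — 2 statements merged into one kernel-verified Lean document; each statement's English description precedes it below -/
import Mathlib

section
/- Let p ∈ (2,3) and let S ∈ Ω_p be a price path with associated partitions (P^n). Let 𝒵 be a Borel measurable subset of C²_b(ℝ^d;ℝ^d) and let ν be a probability measure on 𝒵 such that ∫_𝒵 ‖f‖_{C²_b} dν(f) < ∞. For f ∈ 𝒵 let φ^f_t := f(S_t) be the portfolio generated by f. Then Cover's universal portfolio φ^ν_t := ∫_𝒵 φ^f_t dν(f), t ∈ [0,∞), is well-defined as a Bochner integral in the Banach space of controlled paths (φ,φ') ∈ 𝒱^{p,p/2}_S with jump times contained in ∪_n P^n (equipped with the norm (φ,φ') ↦ |φ_0| + ‖φ,φ'‖_{𝒱^{p,p/2}_S}), and φ^ν is an admissible strategy with respect to S. -/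
open Set Filter MeasureTheory
open scoped Topology InnerProductSpace BigOperators

noncomputable section

/-- `ℝ^d` with the Euclidean norm. -/
abbrev Vec (d : ℕ) := EuclideanSpace ℝ (Fin d)

/-- `ℝ^{d×d}` with the Euclidean (Frobenius) norm. -/
abbrev Mat (d : ℕ) := EuclideanSpace ℝ (Fin d × Fin d)

def mkVec {d : ℕ} (f : Fin d → ℝ) : Vec d := (WithLp.equiv 2 (Fin d → ℝ)).symm f

def mkMat {d : ℕ} (f : Fin d × Fin d → ℝ) : Mat d := (WithLp.equiv 2 (Fin d × Fin d → ℝ)).symm f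

/-- The tensor product `a ⊗ b` of two vectors, as a `d × d` matrix. -/
def tensor {d : ℕ} (a b : Vec d) : Mat d := mkMat (fun ij => a ij.1 * b ij.2)

/-- A matrix (an element of `L(ℝ^d, ℝ^d)`) applied to a vector. -/
def matApply {d : ℕ} (M : Mat d) (v : Vec d) : Vec d := mkVec (fun i => ∑ j, M (i, j) * v j)

/-- The matrix with `(i,j)` entry `Σ_k A_{ki} B_{kj}`, i.e. `AᵀB`. -/
def matTProd {d : ℕ} (A B : Mat d) : Mat d := mkMat (fun ij => ∑ k, A (k, ij.1) * B (k, ij.2))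

/-- The identity matrix. -/
def idMat {d : ℕ} : Mat d := mkMat (fun ij => if ij.1 = ij.2 then (1 : ℝ) else 0)

/-- The contraction `F' G' 𝕏 := Σ_{k,i,j} F'_{ki} G'_{kj} 𝕏_{ij}`. -/
def ddContract {d : ℕ} (A B X : Mat d) : ℝ := ∑ k, ∑ i, ∑ j, A (k, i) * B (k, j) * X (i, j)

/-- The increment process `(s,t) ↦ X_t - X_s` of a path. -/
def inc {E : Type*} [AddCommGroup E] (X : ℝ → E) : ℝ → ℝ → E := fun s t => X t - X s

/-- A (finite) partition `s = τ_0 < τ_1 < ⋯ < τ_N = t` of the interval `[s,t]`. -/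
structure IntervalPartition (s t : ℝ) where
  N : ℕ
  τ : ℕ → ℝ
  Npos : 0 < N
  first : τ 0 = s
  last : τ N = t
  mono : ∀ k < N, τ k < τ (k + 1)

/-- The mesh of the partition is `< δ`. -/
def IntervalPartition.MeshLt {s t : ℝ} (P : IntervalPartition s t) (δ : ℝ) : Prop :=
  ∀ k < P.N, P.τ (k + 1) - P.τ k < δ

/-- The sum `Σ_{[u,v] ∈ P} |A_{u,v}|^p` along a partition `P`, for a two-parameter
function `A`. -/
def varSumOn {E : Type*} [NormedAddCommGroup E] (p : ℝ) (A : ℝ → ℝ → E)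
    {s t : ℝ} (P : IntervalPartition s t) : ℝ :=
  ∑ k ∈ Finset.range P.N, ‖A (P.τ k) (P.τ (k + 1))‖ ^ p

/-- The set of all sums `Σ_{[u,v] ∈ P} |A_{u,v}|^p` over partitions `P` of `[s,t]`. -/
def pVarSums {E : Type*} [NormedAddCommGroup E] (p : ℝ) (A : ℝ → ℝ → E) (s t : ℝ) : Set ℝ :=
  {x | ∃ P : IntervalPartition s t, x = varSumOn p A P}

/-- The `p`-variation `‖A‖_{p,[s,t]} := (sup_P Σ_{[u,v] ∈ P} |A_{u,v}|^p)^{1/p}` of a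
two-parameter function `A` (for a path `X`, apply this to `inc X`). -/
def pVar {E : Type*} [NormedAddCommGroup E] (p : ℝ) (A : ℝ → ℝ → E) (s t : ℝ) : ℝ :=
  sSup (pVarSums p A s t) ^ (1 / p)

/-- `A` has finite `p`-variation on `[s,t]`. -/
def HasBddPVar {E : Type*} [NormedAddCommGroup E] (p : ℝ) (A : ℝ → ℝ → E) (s t : ℝ) : Prop :=
  BddAbove (pVarSums p A s t)

/-- `f` is càdlàg on `[a,b]`: right-continuous on `[a,b)` with left limits on `(a,b]`. -/
def CadlagOn {E : Type*} [TopologicalSpace E] (f : ℝ → E) (a b : ℝ) : Prop :=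
  (∀ t ∈ Ico a b, Tendsto f (𝓝[>] t) (𝓝 (f t))) ∧
  (∀ t ∈ Ioc a b, ∃ l, Tendsto f (𝓝[<] t) (𝓝 l))

/-- The supremum norm of `f` on `[a,b]`. -/
def supNormOn {E : Type*} [NormedAddCommGroup E] (f : ℝ → E) (a b : ℝ) : ℝ :=
  sSup ((fun u => ‖f u‖) '' Icc a b)

/-- A control function on `Δ_{[0,T]}`: nonnegative and superadditive. -/
def IsControl (T : ℝ) (w : ℝ → ℝ → ℝ) : Prop :=
  (∀ ⦃s t : ℝ⦄, 0 ≤ s → s ≤ t → t ≤ T → 0 ≤ w s t) ∧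
  (∀ ⦃s u t : ℝ⦄, 0 ≤ s → s ≤ u → u ≤ t → t ≤ T → w s u + w u t ≤ w s t)

/-- The set of jump times of `f` in `(0,T]`. -/
def jumpSet {E : Type*} [TopologicalSpace E] (f : ℝ → E) (T : ℝ) : Set ℝ :=
  {u | u ∈ Ioc (0 : ℝ) T ∧ Function.leftLim f u ≠ f u}

/-- A càdlàg `p`-rough path `(X, Z, 𝕏)` over `ℝ^d` on `[0,T]`:
`X, Z ∈ D^p([0,T];ℝ^d)`, `𝕏 ∈ D^{p/2}_2(Δ_{[0,T]};ℝ^{d×d})`, and Chen's relation holds. -/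
structure IsRoughPath (d : ℕ) (p T : ℝ) (X Z : ℝ → Vec d) (XX : ℝ → ℝ → Mat d) : Prop where
  cadlagX : CadlagOn X 0 T
  cadlagZ : CadlagOn Z 0 T
  varX : HasBddPVar p (inc X) 0 T
  varZ : HasBddPVar p (inc Z) 0 T
  cadlagXX₁ : ∀ t ∈ Icc (0 : ℝ) T, CadlagOn (fun s => XX s t) 0 t
  cadlagXX₂ : ∀ s ∈ Icc (0 : ℝ) T, CadlagOn (fun t => XX s t) s T
  varXX : HasBddPVar (p / 2) XX 0 T
  chen : ∀ ⦃s u t : ℝ⦄, 0 ≤ s → s ≤ u → u ≤ t → t ≤ T →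
    XX s t = XX s u + XX u t + tensor (Z u - Z s) (X t - X u)

/-- The remainder `R^F_{s,t} := F_{s,t} - F'_s Z_{s,t}` of a controlled path. -/
def rem {d : ℕ} (Z F : ℝ → Vec d) (F' : ℝ → Mat d) : ℝ → ℝ → Vec d :=
  fun s t => F t - F s - matApply (F' s) (Z t - Z s)

/-- `(F, F')` is a controlled path in `𝒱^{q,r}_Z` on `[0,T]` (with `F ∈ D^p`):
`F ∈ D^p([0,T];ℝ^d)`, `F' ∈ D^q([0,T];L(ℝ^d,ℝ^d))` and `R^F ∈ D^r_2(Δ_{[0,T]};ℝ^d)`. -/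
structure IsControlledPath (d : ℕ) (p q r T : ℝ) (Z : ℝ → Vec d)
    (F : ℝ → Vec d) (F' : ℝ → Mat d) : Prop where
  cadlagF : CadlagOn F 0 T
  varF : HasBddPVar p (inc F) 0 T
  cadlagF' : CadlagOn F' 0 T
  varF' : HasBddPVar q (inc F') 0 T
  cadlagR₁ : ∀ t ∈ Icc (0 : ℝ) T, CadlagOn (fun s => rem Z F F' s t) 0 t
  cadlagR₂ : ∀ s ∈ Icc (0 : ℝ) T, CadlagOn (fun t => rem Z F F' s t) s T
  varR : HasBddPVar r (rem Z F F') 0 T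

/-- The controlled path norm `‖F,F'‖_{𝒱^{q,r}_Z,[0,T]} := |F'_0| + ‖F'‖_q + ‖R^F‖_r`. -/
def ctrlNorm {d : ℕ} (q r T : ℝ) (Z F : ℝ → Vec d) (F' : ℝ → Mat d) : ℝ :=
  ‖F' 0‖ + pVar q (inc F') 0 T + pVar r (rem Z F F') 0 T

/-- Compensated Riemann sum `Σ (⟨F_u, G_{u,v}⟩ + F'_u G'_u 𝕏_{u,v})` along a partition of `[0,t]`. -/
def compSum {d : ℕ} (F : ℝ → Vec d) (F' : ℝ → Mat d) (G : ℝ → Vec d) (G' : ℝ → Mat d)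
    (XX : ℝ → ℝ → Mat d) {t : ℝ} (P : IntervalPartition 0 t) : ℝ :=
  ∑ k ∈ Finset.range P.N,
    (⟪F (P.τ k), G (P.τ (k + 1)) - G (P.τ k)⟫_ℝ
      + ddContract (F' (P.τ k)) (G' (P.τ k)) (XX (P.τ k) (P.τ (k + 1))))

/-- `I` is the value at time `t` of the rough integral `∫₀ᵗ F dG`: the compensated Riemann
sums converge to `I` along every sequence of partitions of `[0,t]` with mesh tending to `0`. -/
def IsRoughIntegralAt {d : ℕ} (F : ℝ → Vec d) (F' : ℝ → Mat d) (G : ℝ → Vec d)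
    (G' : ℝ → Mat d) (XX : ℝ → ℝ → Mat d) (t : ℝ) (I : ℝ) : Prop :=
  ∀ ε > 0, ∃ δ > 0, ∀ P : IntervalPartition 0 t, P.MeshLt δ →
    |compSum F F' G G' XX P - I| < ε

/-- The rough path seminorm `‖X‖_{p,[0,T]} + ‖Z‖_{p,[0,T]} + ‖𝕏‖_{p/2,[0,T]}`. -/
def roughNorm {d : ℕ} (p T : ℝ) (X Z : ℝ → Vec d) (XX : ℝ → ℝ → Mat d) : ℝ :=
  pVar p (inc X) 0 T + pVar p (inc Z) 0 T + pVar (p / 2) XX 0 T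

/-- The rough path distance `‖X − X̃‖_p + ‖Z − Z̃‖_p + ‖𝕏 − 𝕏̃‖_{p/2}`. -/
def roughDist {d : ℕ} (p T : ℝ) (X Z X' Z' : ℝ → Vec d) (XX XX' : ℝ → ℝ → Mat d) : ℝ :=
  pVar p (inc (fun u => X u - X' u)) 0 T + pVar p (inc (fun u => Z u - Z' u)) 0 T
    + pVar (p / 2) (fun s t => XX s t - XX' s t) 0 T

/-- A nested sequence of partitions `P^n = {0 = t^n_0 < t^n_1 < ⋯ < t^n_{N_n} = T}` of `[0,T]`
with vanishing mesh size. -/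
structure PartitionSeq (T : ℝ) where
  N : ℕ → ℕ
  t : ℕ → ℕ → ℝ
  Npos : ∀ n, 0 < N n
  first : ∀ n, t n 0 = 0
  last : ∀ n, t n (N n) = T
  mono : ∀ n, ∀ k < N n, t n k < t n (k + 1)
  nested : ∀ n, ∀ k ≤ N n, ∃ l ≤ N (n + 1), t (n + 1) l = t n k
  mesh : ∀ ε > 0, ∃ M : ℕ, ∀ n ≥ M, ∀ k < N n, t n (k + 1) - t n k < ε

/-- The set `∪_{n ∈ ℕ} P^n` of all partition points. -/
def PartitionSeq.points {T : ℝ} (π : PartitionSeq T) : Set ℝ :=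
  {x | ∃ n, ∃ k ≤ π.N n, π.t n k = x}

/-- The left-point discretization
`S^n_u = S_T 1_{{T}}(u) + Σ_k S_{t^n_k} 1_{[t^n_k, t^n_{k+1})}(u)`. -/
def PartitionSeq.disc {T : ℝ} (π : PartitionSeq T) {E : Type*} [NormedAddCommGroup E]
    (S : ℝ → E) (n : ℕ) (u : ℝ) : E :=
  Set.indicator {T} S u
    + ∑ k ∈ Finset.range (π.N n),
        Set.indicator (Ico (π.t n k) (π.t n (k + 1))) (fun _ => S (π.t n k)) u

/-- The Riemann sum `∫₀ᵘ S^n ⊗ dS := Σ_k S_{t^n_k} ⊗ (S_{t^n_{k+1} ∧ u} - S_{t^n_k ∧ u})`. -/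
def riemannSum {d : ℕ} {T : ℝ} (π : PartitionSeq T) (S : ℝ → Vec d) (n : ℕ) (u : ℝ) : Mat d :=
  ∑ k ∈ Finset.range (π.N n),
    tensor (S (π.t n k)) (S (min (π.t n (k + 1)) u) - S (min (π.t n k) u))

/-- The Riemann sum `∫_{t^n_k}^{t^n_l} S^n ⊗ dS` between two partition points. -/
def riemannBetween {d : ℕ} {T : ℝ} (π : PartitionSeq T) (S : ℝ → Vec d) (n k l : ℕ) : Mat d :=
  ∑ j ∈ Finset.Ico k l, tensor (S (π.t n j)) (S (π.t n (j + 1)) - S (π.t n j))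

/-- Property (RIE) for `S` with respect to `p` and `(P^n)`, with Riemann-sum limit `II` and
control function `w`:  `S` is càdlàg, `S^n → S` uniformly, the Riemann sums `∫₀· S^n ⊗ dS`
converge uniformly to `II`, and `w` dominates `|S_{s,t}|^p` as well as
`|∫_{t^n_k}^{t^n_l} S^n ⊗ dS - S_{t^n_k} ⊗ S_{t^n_k,t^n_l}|^{p/2}`. -/
structure SatisfiesRIE (d : ℕ) (p T : ℝ) (π : PartitionSeq T) (S : ℝ → Vec d)
    (II : ℝ → Mat d) (w : ℝ → ℝ → ℝ) : Prop where
  cadlag : CadlagOn S 0 T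
  discUnif : TendstoUniformlyOn (fun n => π.disc S n) S atTop (Icc 0 T)
  riemannUnif : TendstoUniformlyOn (fun n => riemannSum π S n) II atTop (Icc 0 T)
  control : IsControl T w
  domS : ∀ ⦃s t : ℝ⦄, 0 ≤ s → s ≤ t → t ≤ T → ‖S t - S s‖ ^ p ≤ w s t
  domA : ∀ n : ℕ, ∀ ⦃k l : ℕ⦄, k < l → l ≤ π.N n →
    ‖riemannBetween π S n k l - tensor (S (π.t n k)) (S (π.t n l) - S (π.t n k))‖ ^ (p / 2)
      ≤ w (π.t n k) (π.t n l)

/-- The canonical second-level function `A_{s,t} := ∫ₛᵗ S ⊗ dS - S_s ⊗ S_{s,t}`,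
built from the limit `II = ∫₀· S ⊗ dS` of the Riemann sums in Property (RIE). -/
def roughA {d : ℕ} (S : ℝ → Vec d) (II : ℝ → Mat d) : ℝ → ℝ → Mat d :=
  fun s t => II t - II s - tensor (S s) (S t - S s)

/-- A nested sequence of locally finite partitions of `[0,∞)`, with vanishing mesh size
on compact intervals. -/
structure PartitionSeqInf where
  t : ℕ → ℕ → ℝ
  first : ∀ n, t n 0 = 0
  mono : ∀ n k, t n k < t n (k + 1)
  locFin : ∀ n, Tendsto (t n) atTop atTop
  nested : ∀ n k, ∃ l, t (n + 1) l = t n k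
  mesh : ∀ T > 0, ∀ ε > 0, ∃ M : ℕ, ∀ n ≥ M, ∀ k, t n k < T → t n (k + 1) - t n k < ε

/-- The set `∪_{n ∈ ℕ} P^n` of all partition points. -/
def PartitionSeqInf.points (π : PartitionSeqInf) : Set ℝ := {x | ∃ n k, π.t n k = x}

/-- The points of the restricted partition `P^n([0,T]) = (P^n ∪ {T}) ∩ [0,T]`. -/
def partPtsInf (τ : ℕ → ℝ) (T : ℝ) : Set ℝ := {x | (∃ k, τ k = x) ∧ x ≤ T} ∪ {T}

/-- Left-point discretization of `S` along the partition `τ` restricted to `[0,T]`. -/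
def discInf {E : Type*} [NormedAddCommGroup E] (τ : ℕ → ℝ) (S : ℝ → E) (T u : ℝ) : E :=
  Set.indicator {T} S u
    + ∑' k : ℕ, Set.indicator (Ico (τ k) (min (τ (k + 1)) T)) (fun _ => S (τ k)) u

/-- The Riemann sum `∫₀ᵘ S^n ⊗ dS := Σ_k S_{τ_k} ⊗ (S_{τ_{k+1} ∧ u} - S_{τ_k ∧ u})`. -/
def riemannInf {d : ℕ} (τ : ℕ → ℝ) (S : ℝ → Vec d) (u : ℝ) : Mat d :=
  ∑' k : ℕ, tensor (S (τ k)) (S (min (τ (k + 1)) u) - S (min (τ k) u))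

/-- Property (RIE) on `[0,T]` for the restriction of `S` to `[0,T]`, along the restricted
partitions `P^n([0,T])`, with Riemann-sum limit `II` and control function `w`. -/
structure SatisfiesRIEInf (d : ℕ) (p T : ℝ) (π : PartitionSeqInf) (S : ℝ → Vec d)
    (II : ℝ → Mat d) (w : ℝ → ℝ → ℝ) : Prop where
  cadlag : CadlagOn S 0 T
  discUnif : TendstoUniformlyOn (fun n => discInf (π.t n) S T) S atTop (Icc 0 T)
  riemannUnif : TendstoUniformlyOn (fun n => riemannInf (π.t n) S) II atTop (Icc 0 T)
  control : IsControl T w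
  domS : ∀ ⦃s t : ℝ⦄, 0 ≤ s → s ≤ t → t ≤ T → ‖S t - S s‖ ^ p ≤ w s t
  domA : ∀ n : ℕ, ∀ ⦃a b : ℝ⦄, a ∈ partPtsInf (π.t n) T → b ∈ partPtsInf (π.t n) T → a ≤ b →
    ‖riemannInf (π.t n) S b - riemannInf (π.t n) S a - tensor (S a) (S b - S a)‖ ^ (p / 2)
      ≤ w a b

/-- `S : [0,∞) → ℝ^d` is a price path (`S ∈ Ω_p`) with partition sequence `π` and
Riemann-sum limit `II = ∫₀· S ⊗ dS`: for every `T > 0` the restriction `S|_{[0,T]}`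
satisfies Property (RIE) with respect to `p` and `(P^n([0,T]))`. -/
def IsPricePath {d : ℕ} (p : ℝ) (π : PartitionSeqInf) (S : ℝ → Vec d)
    (II : ℝ → Mat d) : Prop :=
  ∀ T > 0, ∃ w : ℝ → ℝ → ℝ, SatisfiesRIEInf d p T π S II w

/-- All jump times of `φ` in `(0,∞)` belong to the set `P`. -/
def JumpsIn {E : Type*} [TopologicalSpace E] (φ : ℝ → E) (P : Set ℝ) : Prop :=
  ∀ t > (0 : ℝ), Function.leftLim φ t ≠ φ t → t ∈ P

/-- `φ` is an admissible strategy with respect to the price path `S` (with partition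
sequence `π`), with exponents `q, r` and Gubinelli derivative `φ'`. -/
structure AdmissibleWith {d : ℕ} (p : ℝ) (π : PartitionSeqInf) (S φ : ℝ → Vec d)
    (q r : ℝ) (φ' : ℝ → Mat d) : Prop where
  hpq : p ≤ q
  hr : 1 < r
  hq : 2 / p + 1 / q > 1
  hrpq : 1 / r = 1 / p + 1 / q
  ctrl : ∀ T > 0, IsControlledPath d p q r T S φ φ'
  jumps : JumpsIn φ π.points

/-- `φ` is an admissible strategy with respect to `S` (`φ ∈ 𝒜_S`). -/
def IsAdmissible {d : ℕ} (p : ℝ) (π : PartitionSeqInf) (S φ : ℝ → Vec d) : Prop :=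
  ∃ (q r : ℝ) (φ' : ℝ → Mat d), AdmissibleWith p π S φ q r φ'

/-- The left-point Riemann sum `Σ_k ⟨φ_{τ_k}, S_{τ_{k+1} ∧ t} - S_{τ_k ∧ t}⟩` of the
capital process. -/
def capSum {d : ℕ} (τ : ℕ → ℝ) (φ S : ℝ → Vec d) (t : ℝ) : ℝ :=
  ∑' k : ℕ, ⟪φ (τ k), S (min (τ (k + 1)) t) - S (min (τ k) t)⟫_ℝ

/-- `f ∈ C²_b`: twice continuously (Fréchet) differentiable with bounded `f`, `Df`, `D²f`. -/
def IsC2b {E F : Type*} [NormedAddCommGroup E] [NormedSpace ℝ E]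
    [NormedAddCommGroup F] [NormedSpace ℝ F] (f : E → F) : Prop :=
  ContDiff ℝ 2 f ∧ (∃ M, ∀ x, ‖f x‖ ≤ M) ∧ (∃ M, ∀ x, ‖fderiv ℝ f x‖ ≤ M) ∧
    (∃ M, ∀ x, ‖fderiv ℝ (fderiv ℝ f) x‖ ≤ M)

/-- The norm `‖f‖_{C²_b} := ‖f‖_∞ + ‖Df‖_∞ + ‖D²f‖_∞`. -/
def c2bNorm {E F : Type*} [NormedAddCommGroup E] [NormedSpace ℝ E]
    [NormedAddCommGroup F] [NormedSpace ℝ F] (f : E → F) : ℝ :=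
  sSup (Set.range fun x => ‖f x‖) + sSup (Set.range fun x => ‖fderiv ℝ f x‖)
    + sSup (Set.range fun x => ‖fderiv ℝ (fderiv ℝ f) x‖)

/-- The matrix of a continuous linear map `ℝ^d → ℝ^d`. -/
def clmToMat {d : ℕ} (L : Vec d →L[ℝ] Vec d) : Mat d :=
  mkMat (fun ij => L (EuclideanSpace.single ij.2 1) ij.1)

/-! A `C²_b` map `f` turns `S` into the controlled path `(f(S), Df(S))`: `f` and `Df` are
Lipschitz and the first-order Taylor remainder of `f` is quadratic, so the increments of
`f(S)` and `Df(S)` and the remainder are dominated by `|S_{s,t}|` and `|S_{s,t}|²`, hence by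
the control of `S`. All three estimates hold with constant `‖f‖_{C²_b}` (times `d` for the
matrix of `Df`), so they pass to `g = ∫ f dν` and `g' = ∫ Df dν` with constant
`∫ ‖f‖_{C²_b} dν`. Since `g` is continuous, `g(S)` can only jump where `S` does. -/

section Matrices

variable {d : ℕ}

lemma continuous_matApply : Continuous (fun q : Mat d × Vec d => matApply q.1 q.2) := by
  simp only [matApply, mkVec, WithLp.equiv_symm_apply]
  fun_prop

lemma matApply_clmToMat (L : Vec d →L[ℝ] Vec d) (v : Vec d) :
    matApply (clmToMat L) v = L v := by
  conv_rhs => rw [← (EuclideanSpace.basisFun (Fin d) ℝ).sum_repr v]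
  ext i
  simp [matApply, clmToMat, mkVec, mkMat, mul_comm]

lemma clmToMat_sub (L L' : Vec d →L[ℝ] Vec d) :
    clmToMat L - clmToMat L' = clmToMat (L - L') := by
  ext ij
  simp [clmToMat, mkMat]

lemma norm_clmToMat_le (L : Vec d →L[ℝ] Vec d) : ‖clmToMat L‖ ≤ d * ‖L‖ := by
  have entry (ij : Fin d × Fin d) : ‖clmToMat L ij‖ ≤ ‖L‖ :=
    calc ‖clmToMat L ij‖ = ‖L (EuclideanSpace.single ij.2 1) ij.1‖ := rfl
      _ ≤ ‖L (EuclideanSpace.single ij.2 1)‖ := PiLp.norm_apply_le _ _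
      _ ≤ ‖L‖ := by simpa using L.le_opNorm (EuclideanSpace.single ij.2 (1 : ℝ))
  calc ‖clmToMat L‖ = √(∑ ij, ‖clmToMat L ij‖ ^ 2) := EuclideanSpace.norm_eq _
    _ ≤ √(∑ _ij : Fin d × Fin d, ‖L‖ ^ 2) := by gcongr with ij; exact entry ij
    _ = d * ‖L‖ := by
      rw [Finset.sum_const, Finset.card_univ, Fintype.card_prod, Fintype.card_fin, nsmul_eq_mul,
        Nat.cast_mul, ← sq, ← mul_pow]
      exact Real.sqrt_sq (by positivity)

def matApplyCLM (v : Vec d) : Mat d →L[ℝ] Vec d :=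
  LinearMap.toContinuousLinearMap
    { toFun := fun M => matApply M v
      map_add' := fun M N => by ext i; simp [matApply, mkVec, add_mul, Finset.sum_add_distrib]
      map_smul' := fun c M => by ext i; simp [matApply, mkVec, Finset.mul_sum, mul_assoc] }

lemma matApplyCLM_apply (v : Vec d) (M : Mat d) : matApplyCLM v M = matApply M v := rfl

end Matrices

lemma CadlagOn.mono {E : Type*} [TopologicalSpace E] {f : ℝ → E} {a b a' b' : ℝ}
    (h : CadlagOn f a b) (ha : a ≤ a') (hb : b' ≤ b) : CadlagOn f a' b' :=
  ⟨fun t ht => h.1 t ⟨ha.trans ht.1, ht.2.trans_le hb⟩,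
   fun t ht => h.2 t ⟨ha.trans_lt ht.1, ht.2.trans hb⟩⟩

lemma CadlagOn.comp {E F : Type*} [TopologicalSpace E] [TopologicalSpace F] {f : ℝ → E}
    {k : E → F} {a b : ℝ} (hk : Continuous k) (h : CadlagOn f a b) :
    CadlagOn (fun t => k (f t)) a b :=
  ⟨fun t ht => (hk.tendsto _).comp (h.1 t ht),
   fun t ht => let ⟨l, hl⟩ := h.2 t ht; ⟨k l, (hk.tendsto _).comp hl⟩⟩

lemma continuous_of_norm_sub_le {E F : Type*} [SeminormedAddCommGroup E]
    [SeminormedAddCommGroup F] {g : E → F} {K : ℝ} (h : ∀ x y, ‖g x - g y‖ ≤ K * ‖x - y‖) :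
    Continuous g :=
  (LipschitzWith.of_dist_le' (K := K) (by simpa only [dist_eq_norm] using h)).continuous

section Variation

lemma IntervalPartition.τ_mem_Icc {T : ℝ} (P : IntervalPartition 0 T) {k : ℕ} (hk : k ≤ P.N) :
    P.τ k ∈ Icc 0 T := by
  have hmono : MonotoneOn P.τ (Iic P.N) :=
    monotoneOn_of_le_succ ordConnected_Iic fun k _ _ hk => (P.mono k (Order.succ_le_iff.1 hk)).le
  constructor
  · simpa [P.first] using hmono (by simp) (mem_Iic.2 hk) (Nat.zero_le k)
  · simpa [P.last] using hmono (mem_Iic.2 hk) (mem_Iic.2 le_rfl) hk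

lemma IsControl.sum_le {T : ℝ} {w : ℝ → ℝ → ℝ} (hw : IsControl T w) (P : IntervalPartition 0 T) :
    ∑ k ∈ Finset.range P.N, w (P.τ k) (P.τ (k + 1)) ≤ w 0 T := by
  suffices ∀ m ≤ P.N, ∑ k ∈ Finset.range m, w (P.τ k) (P.τ (k + 1)) ≤ w 0 (P.τ m) by
    simpa [P.last] using this P.N le_rfl
  intro m hm
  induction m with
  | zero =>
    have hT : 0 ≤ T := (P.τ_mem_Icc (Nat.zero_le _)).1.trans (P.τ_mem_Icc (Nat.zero_le _)).2
    simpa [P.first] using hw.1 le_rfl le_rfl hT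
  | succ m ih =>
    rw [Finset.sum_range_succ]
    calc _ ≤ w 0 (P.τ m) + w (P.τ m) (P.τ (m + 1)) := by gcongr; exact ih (by omega)
      _ ≤ w 0 (P.τ (m + 1)) := hw.2 le_rfl (P.τ_mem_Icc (by omega)).1 (P.mono m hm).le
          (P.τ_mem_Icc hm).2

lemma hasBddPVar_of_le_mul_control {E : Type*} [NormedAddCommGroup E] {e K T : ℝ}
    {A : ℝ → ℝ → E} {w : ℝ → ℝ → ℝ} (hw : IsControl T w) (hK : 0 ≤ K)
    (h : ∀ ⦃s t : ℝ⦄, 0 ≤ s → s ≤ t → t ≤ T → ‖A s t‖ ^ e ≤ K * w s t) :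
    HasBddPVar e A 0 T := by
  refine ⟨K * w 0 T, ?_⟩
  rintro _ ⟨P, rfl⟩
  calc varSumOn e A P ≤ ∑ k ∈ Finset.range P.N, K * w (P.τ k) (P.τ (k + 1)) := by
        refine Finset.sum_le_sum fun k hk => ?_
        have hk : k < P.N := Finset.mem_range.1 hk
        exact h (P.τ_mem_Icc hk.le).1 (P.mono k hk).le (P.τ_mem_Icc hk).2
    _ ≤ K * w 0 T := by rw [← Finset.mul_sum]; exact mul_le_mul_of_nonneg_left (hw.sum_le P) hK

lemma hasBddPVar_of_norm_le_mul_pow {E F : Type*} [NormedAddCommGroup E]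
    [NormedAddCommGroup F] {p m K T : ℝ} {A : ℝ → ℝ → E} {X : ℝ → F} {w : ℝ → ℝ → ℝ}
    (hw : IsControl T w) (hXw : ∀ ⦃s t : ℝ⦄, 0 ≤ s → s ≤ t → t ≤ T → ‖X t - X s‖ ^ p ≤ w s t)
    (hp : 0 < p) (hm : 0 < m) (hK : 0 ≤ K)
    (hA : ∀ ⦃s t : ℝ⦄, 0 ≤ s → s ≤ t → t ≤ T → ‖A s t‖ ≤ K * ‖X t - X s‖ ^ m) :
    HasBddPVar (p / m) A 0 T := by
  refine hasBddPVar_of_le_mul_control (K := K ^ (p / m)) hw (Real.rpow_nonneg hK _)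
    fun s t hs hst htT => ?_
  calc ‖A s t‖ ^ (p / m) ≤ (K * ‖X t - X s‖ ^ m) ^ (p / m) := by
        gcongr; exact hA hs hst htT
    _ = K ^ (p / m) * ‖X t - X s‖ ^ p := by
        rw [Real.mul_rpow hK (by positivity), ← Real.rpow_mul (norm_nonneg _),
          mul_div_cancel₀ _ hm.ne']
    _ ≤ K ^ (p / m) * w s t := by gcongr; exact hXw hs hst htT

end Variation

section C2b

variable {E F : Type*} [NormedAddCommGroup E] [NormedSpace ℝ E]
    [NormedAddCommGroup F] [NormedSpace ℝ F] {f : E → F}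

lemma c2bNorm_eq_iSup_add :
    c2bNorm f = (⨆ x, ‖f x‖) + (⨆ x, ‖fderiv ℝ f x‖) + ⨆ x, ‖fderiv ℝ (fderiv ℝ f) x‖ := rfl

lemma IsC2b.norm_le_c2bNorm (hf : IsC2b f) (x : E) : ‖f x‖ ≤ c2bNorm f := by
  obtain ⟨-, ⟨M, hM⟩, -, -⟩ := hf
  have := le_ciSup ⟨M, forall_mem_range.2 hM⟩ x
  have := Real.iSup_nonneg fun x => norm_nonneg (fderiv ℝ f x)
  have := Real.iSup_nonneg fun x => norm_nonneg (fderiv ℝ (fderiv ℝ f) x)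
  rw [c2bNorm_eq_iSup_add]
  linarith

lemma IsC2b.norm_fderiv_le_c2bNorm (hf : IsC2b f) (x : E) : ‖fderiv ℝ f x‖ ≤ c2bNorm f := by
  obtain ⟨-, -, ⟨M, hM⟩, -⟩ := hf
  have := le_ciSup ⟨M, forall_mem_range.2 hM⟩ x
  have := Real.iSup_nonneg fun x => norm_nonneg (f x)
  have := Real.iSup_nonneg fun x => norm_nonneg (fderiv ℝ (fderiv ℝ f) x)
  rw [c2bNorm_eq_iSup_add]
  linarith

lemma IsC2b.norm_fderiv_fderiv_le_c2bNorm (hf : IsC2b f) (x : E) :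
    ‖fderiv ℝ (fderiv ℝ f) x‖ ≤ c2bNorm f := by
  obtain ⟨-, -, -, ⟨M, hM⟩⟩ := hf
  have := le_ciSup ⟨M, forall_mem_range.2 hM⟩ x
  have := Real.iSup_nonneg fun x => norm_nonneg (f x)
  have := Real.iSup_nonneg fun x => norm_nonneg (fderiv ℝ f x)
  rw [c2bNorm_eq_iSup_add]
  linarith

lemma IsC2b.c2bNorm_nonneg (hf : IsC2b f) : 0 ≤ c2bNorm f :=
  (norm_nonneg _).trans (hf.norm_le_c2bNorm 0)

lemma IsC2b.norm_sub_le (hf : IsC2b f) (x y : E) : ‖f x - f y‖ ≤ c2bNorm f * ‖x - y‖ :=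
  convex_univ.norm_image_sub_le_of_norm_fderiv_le (fun u _ => (hf.1.differentiable two_ne_zero) u)
    (fun u _ => hf.norm_fderiv_le_c2bNorm u) (mem_univ y) (mem_univ x)

lemma IsC2b.norm_fderiv_sub_le (hf : IsC2b f) (x y : E) :
    ‖fderiv ℝ f x - fderiv ℝ f y‖ ≤ c2bNorm f * ‖x - y‖ :=
  convex_univ.norm_image_sub_le_of_norm_fderiv_le
    (fun u _ => (hf.1.fderiv_right (m := 1) le_rfl).differentiable one_ne_zero u)
    (fun u _ => hf.norm_fderiv_fderiv_le_c2bNorm u) (mem_univ y) (mem_univ x)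

lemma IsC2b.norm_sub_sub_fderiv_le (hf : IsC2b f) (x y : E) :
    ‖f y - f x - fderiv ℝ f x (y - x)‖ ≤ c2bNorm f * ‖y - x‖ ^ 2 := by
  rw [sq, ← mul_assoc]
  refine (convex_segment x y).norm_image_sub_le_of_norm_fderiv_le'
    (fun u _ => (hf.1.differentiable two_ne_zero) u) (fun u hu => ?_)
    (left_mem_segment ℝ x y) (right_mem_segment ℝ x y)
  exact (hf.norm_fderiv_sub_le u x).trans
    (mul_le_mul_of_nonneg_left (norm_sub_le_of_mem_segment hu) hf.c2bNorm_nonneg)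

end C2b

lemma IsC2b.norm_clmToMat_fderiv_sub_le {d : ℕ} {f : Vec d → Vec d} (hf : IsC2b f) (x y : Vec d) :
    ‖clmToMat (fderiv ℝ f x) - clmToMat (fderiv ℝ f y)‖ ≤ d * c2bNorm f * ‖x - y‖ := by
  rw [clmToMat_sub, mul_assoc]
  exact (norm_clmToMat_le _).trans (by gcongr; exact hf.norm_fderiv_sub_le x y)

section Integral

variable {Z : Type*} [MeasurableSpace Z] {ν : Measure Z}

lemma norm_integral_sub_integral_le {E G : Type*} [NormedAddCommGroup E] [NormedAddCommGroup G]
    [NormedSpace ℝ G] {F : Z → E → G} {c : Z → ℝ} (hc : Integrable c ν)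
    (hF : ∀ x, Integrable (F · x) ν) (h : ∀ z x y, ‖F z x - F z y‖ ≤ c z * ‖x - y‖) (x y : E) :
    ‖(∫ z, F z x ∂ν) - ∫ z, F z y ∂ν‖ ≤ (∫ z, c z ∂ν) * ‖x - y‖ := by
  rw [← integral_sub (hF x) (hF y), ← integral_mul_const]
  exact norm_integral_le_of_norm_le (hc.mul_const _) (Eventually.of_forall fun z => h z x y)

variable {d : ℕ} {f : Z → Vec d → Vec d}

lemma integrable_apply_of_integrable_c2bNorm (hf : ∀ z, IsC2b (f z))
    (hint : Integrable (fun z => c2bNorm (f z)) ν) {x : Vec d}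
    (hmeas : AEStronglyMeasurable (fun z => f z x) ν) : Integrable (fun z => f z x) ν :=
  hint.mono' hmeas (Eventually.of_forall fun z => (hf z).norm_le_c2bNorm x)

lemma integrable_clmToMat_fderiv_of_integrable_c2bNorm (hf : ∀ z, IsC2b (f z))
    (hint : Integrable (fun z => c2bNorm (f z)) ν) {x : Vec d}
    (hmeas : AEStronglyMeasurable (fun z => clmToMat (fderiv ℝ (f z) x)) ν) :
    Integrable (fun z => clmToMat (fderiv ℝ (f z) x)) ν :=
  (hint.const_mul d).mono' hmeas (Eventually.of_forall fun z =>
    (norm_clmToMat_le _).trans (by gcongr; exact (hf z).norm_fderiv_le_c2bNorm x))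

lemma norm_integral_sub_sub_matApply_le (hf : ∀ z, IsC2b (f z))
    (hint : Integrable (fun z => c2bNorm (f z)) ν)
    (hmeas : ∀ x, AEStronglyMeasurable (fun z => f z x) ν)
    (hmeas' : ∀ x, AEStronglyMeasurable (fun z => clmToMat (fderiv ℝ (f z) x)) ν) (x y : Vec d) :
    ‖(∫ z, f z y ∂ν) - (∫ z, f z x ∂ν) - matApply (∫ z, clmToMat (fderiv ℝ (f z) x) ∂ν) (y - x)‖
      ≤ (∫ z, c2bNorm (f z) ∂ν) * ‖y - x‖ ^ 2 := by
  have hval (x : Vec d) := integrable_apply_of_integrable_c2bNorm hf hint (hmeas x)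
  have hD := integrable_clmToMat_fderiv_of_integrable_c2bNorm hf hint (hmeas' x)
  have hlin : matApply (∫ z, clmToMat (fderiv ℝ (f z) x) ∂ν) (y - x)
      = ∫ z, fderiv ℝ (f z) x (y - x) ∂ν := by
    simpa only [matApplyCLM_apply, matApply_clmToMat] using
      ((matApplyCLM (y - x)).integral_comp_comm hD).symm
  have hlinInt : Integrable (fun z => fderiv ℝ (f z) x (y - x)) ν := by
    simpa only [matApplyCLM_apply, matApply_clmToMat] using (matApplyCLM (y - x)).integrable_comp hD
  have hdiff : Integrable (fun z => f z y - f z x) ν := (hval y).sub (hval x)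
  rw [hlin, ← integral_sub (hval y) (hval x), ← integral_sub hdiff hlinInt,
    ← integral_mul_const]
  exact norm_integral_le_of_norm_le (hint.mul_const _)
    (Eventually.of_forall fun z => (hf z).norm_sub_sub_fderiv_le x y)

end Integral

section ControlledPath

variable {d : ℕ} {g : Vec d → Vec d} {g' : Vec d → Mat d} {K : ℝ}

theorem isControlledPath_comp {p T : ℝ} {S : ℝ → Vec d} {w : ℝ → ℝ → ℝ} (hp : 0 < p)
    (hS : CadlagOn S 0 T) (hw : IsControl T w)
    (hSw : ∀ ⦃s t : ℝ⦄, 0 ≤ s → s ≤ t → t ≤ T → ‖S t - S s‖ ^ p ≤ w s t) (hK : 0 ≤ K)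
    (hg : ∀ x y, ‖g x - g y‖ ≤ K * ‖x - y‖) (hg' : ∀ x y, ‖g' x - g' y‖ ≤ K * ‖x - y‖)
    (hrem : ∀ x y, ‖g y - g x - matApply (g' x) (y - x)‖ ≤ K * ‖y - x‖ ^ 2) :
    IsControlledPath d p p (p / 2) T S (fun t => g (S t)) (fun t => g' (S t)) := by
  have hgc := continuous_of_norm_sub_le hg
  have hg'c := continuous_of_norm_sub_le hg'
  refine ⟨hS.comp hgc, ?_, hS.comp hg'c, ?_, fun t ht => ?_, fun s hs => ?_, ?_⟩
  · simpa using hasBddPVar_of_norm_le_mul_pow (m := 1) hw hSw hp one_pos hK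
      fun s t _ _ _ => by simpa [inc] using hg (S t) (S s)
  · simpa using hasBddPVar_of_norm_le_mul_pow (m := 1) hw hSw hp one_pos hK
      fun s t _ _ _ => by simpa [inc] using hg' (S t) (S s)
  · refine (hS.mono le_rfl ht.2).comp
      (k := fun v => g (S t) - g v - matApply (g' v) (S t - v)) ?_
    exact (continuous_const.sub hgc).sub
      (continuous_matApply.comp (hg'c.prodMk (continuous_const.sub continuous_id)))
  · refine (hS.mono hs.1 le_rfl).comp
      (k := fun v => g v - g (S s) - matApply (g' (S s)) (v - S s)) ?_
    exact (hgc.sub continuous_const).sub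
      (continuous_matApply.comp (continuous_const.prodMk (continuous_id.sub continuous_const)))
  · exact hasBddPVar_of_norm_le_mul_pow (m := 2) hw hSw hp two_pos hK
      fun s t _ _ _ => by rw [Real.rpow_two]; exact hrem (S s) (S t)

end ControlledPath

section PricePath

lemma PartitionSeqInf.exists_mem_Ico (π : PartitionSeqInf) (n : ℕ) {t : ℝ} (ht : 0 ≤ t) :
    ∃ k, t ∈ Ico (π.t n k) (π.t n (k + 1)) := by
  classical
  have hex : ∃ k, t < π.t n k := ((π.locFin n).eventually_gt_atTop t).exists
  have hpos : Nat.find hex ≠ 0 := fun h0 => by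
    have := Nat.find_spec hex
    rw [h0, π.first n] at this
    linarith
  refine ⟨Nat.find hex - 1, not_lt.1 (Nat.find_min hex (by omega)), ?_⟩
  rw [Nat.sub_add_cancel (Nat.one_le_iff_ne_zero.2 hpos)]
  exact Nat.find_spec hex

lemma discInf_eq_of_mem_Ico {E : Type*} [NormedAddCommGroup E] {τ : ℕ → ℝ} (hτ : StrictMono τ)
    (S : ℝ → E) {T u : ℝ} {k : ℕ} (hu : u ∈ Ico (τ k) (τ (k + 1))) (huT : u < T) :
    discInf τ S T u = S (τ k) := by
  have hother (j : ℕ) (hj : j ≠ k) :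
      indicator (Ico (τ j) (min (τ (j + 1)) T)) (fun _ => S (τ j)) u = 0 := by
    refine indicator_of_notMem (fun h => ?_) _
    obtain ⟨h1, h2⟩ := h
    rcases hj.lt_or_gt with hjk | hjk
    · linarith [hτ.monotone (Nat.succ_le_of_lt hjk), (lt_min_iff.1 h2).1, hu.1]
    · linarith [hτ.monotone (Nat.succ_le_of_lt hjk), hu.2]
  rw [discInf, indicator_of_notMem (by simpa using huT.ne), tsum_eq_single k hother,
    indicator_of_mem (show u ∈ Ico _ _ from ⟨hu.1, lt_min hu.2 huT⟩), zero_add]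

variable {d : ℕ} {p : ℝ} {π : PartitionSeqInf} {S : ℝ → Vec d} {II : ℝ → Mat d}

/-- The left-point discretizations of `S` are constant on partition intervals and converge
to `S` uniformly. -/
lemma IsPricePath.tendsto_nhdsLT (hS : IsPricePath p π S II) {t : ℝ} (ht : 0 < t)
    (htπ : t ∉ π.points) : Tendsto S (𝓝[<] t) (𝓝 (S t)) := by
  obtain ⟨w, hRIE⟩ := hS (t + 1) (by linarith)
  obtain ⟨l, hl⟩ := hRIE.cadlag.2 t ⟨ht, by linarith⟩
  suffices S t = l by rwa [this]
  refine eq_of_forall_dist_le fun ε hε => ?_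
  obtain ⟨δ, hδ, hlδ⟩ := Metric.tendsto_nhdsWithin_nhds.1 hl (ε / 2) (half_pos hε)
  obtain ⟨n, hunif, hmesh⟩ :=
    ((Metric.tendstoUniformlyOn_iff.1 hRIE.discUnif (ε / 2) (half_pos hε)).and
      (eventually_atTop.2 (π.mesh (t + 1) (by linarith) δ hδ))).exists
  obtain ⟨k, hk⟩ := π.exists_mem_Ico n ht.le
  have hkt : π.t n k < t := hk.1.lt_of_ne fun h => htπ ⟨n, k, h⟩
  have hdisc := discInf_eq_of_mem_Ico (strictMono_nat_of_lt_succ (π.mono n)) S (T := t + 1) hk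
    (by linarith)
  have hSt : dist (S t) (S (π.t n k)) < ε / 2 := by
    simpa only [hdisc] using hunif t ⟨ht.le, by linarith⟩
  have hSl : dist (S (π.t n k)) l < ε / 2 :=
    hlδ hkt <| by
      rw [Real.dist_eq, abs_of_neg (sub_neg.2 hkt)]
      linarith [hmesh k (by linarith), hk.2]
  linarith [dist_triangle (S t) (S (π.t n k)) l]

lemma IsPricePath.jumpsIn_comp {E : Type*} [TopologicalSpace E] [T2Space E]
    (hS : IsPricePath p π S II) {g : Vec d → E} (hg : Continuous g) :
    JumpsIn (fun t => g (S t)) π.points := fun t ht hjump => by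
  by_contra htπ
  exact hjump (leftLim_eq_of_tendsto ((hg.tendsto _).comp (hS.tendsto_nhdsLT ht htπ)))

theorem IsPricePath.admissibleWith_comp (hS : IsPricePath p π S II) (hp : 2 < p) (hp' : p < 3)
    {g : Vec d → Vec d} {g' : Vec d → Mat d} {K : ℝ} (hK : 0 ≤ K)
    (hg : ∀ x y, ‖g x - g y‖ ≤ K * ‖x - y‖) (hg' : ∀ x y, ‖g' x - g' y‖ ≤ K * ‖x - y‖)
    (hrem : ∀ x y, ‖g y - g x - matApply (g' x) (y - x)‖ ≤ K * ‖y - x‖ ^ 2) :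
    AdmissibleWith p π S (fun t => g (S t)) p (p / 2) (fun t => g' (S t)) := by
  refine ⟨le_rfl, by linarith, ?_, ?_, fun T hT => ?_,
    hS.jumpsIn_comp (continuous_of_norm_sub_le hg)⟩
  · rw [gt_iff_lt, ← add_div, lt_div_iff₀ (by linarith)]
    linarith
  · field_simp
    ring
  · obtain ⟨w, hRIE⟩ := hS T hT
    exact isControlledPath_comp (by linarith) hRIE.cadlag hRIE.control hRIE.domS hK hg hg' hrem

end PricePath

theorem covers_universal_portfolio_admissible_general
    (d : ℕ) (p : ℝ) (hp : 2 < p) (hp' : p < 3)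
    (π : PartitionSeqInf) (S : ℝ → Vec d) (II : ℝ → Mat d)
    (hS : IsPricePath p π S II)
    {Z : Type*} [MeasurableSpace Z] (ν : Measure Z)
    (f : Z → Vec d → Vec d)
    (hf : ∀ z, IsC2b (f z))
    (hmeas : ∀ x : Vec d, AEStronglyMeasurable (fun z => f z x) ν)
    (hmeas' : ∀ x : Vec d, AEStronglyMeasurable (fun z => clmToMat (fderiv ℝ (f z) x)) ν)
    (hint : Integrable (fun z => c2bNorm (f z)) ν) :
    (∀ t : ℝ, Integrable (fun z => f z (S t)) ν ∧
      Integrable (fun z => clmToMat (fderiv ℝ (f z) (S t))) ν) ∧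
    AdmissibleWith p π S (fun t => ∫ z, f z (S t) ∂ν) p (p / 2)
      (fun t => ∫ z, clmToMat (fderiv ℝ (f z) (S t)) ∂ν) := by
  set C := ∫ z, c2bNorm (f z) ∂ν
  have hC : 0 ≤ C := integral_nonneg fun z => (hf z).c2bNorm_nonneg
  have hCK : C ≤ (d + 1) * C := le_mul_of_one_le_left hC (by linarith [d.cast_nonneg (α := ℝ)])
  have hdCK : d * C ≤ (d + 1) * C := by gcongr; linarith
  have hval (x : Vec d) := integrable_apply_of_integrable_c2bNorm hf hint (hmeas x)
  have hD (x : Vec d) := integrable_clmToMat_fderiv_of_integrable_c2bNorm hf hint (hmeas' x)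
  refine ⟨fun t => ⟨hval (S t), hD (S t)⟩, hS.admissibleWith_comp hp hp'
    (g := fun x => ∫ z, f z x ∂ν) (g' := fun x => ∫ z, clmToMat (fderiv ℝ (f z) x) ∂ν)
    (K := (d + 1) * C) (by positivity) (fun x y => ?_) (fun x y => ?_) (fun x y => ?_)⟩
  · exact (norm_integral_sub_integral_le hint hval (fun z => (hf z).norm_sub_le) x y).trans
      (by gcongr)
  · have := norm_integral_sub_integral_le (hint.const_mul d) hD
      (fun z => (hf z).norm_clmToMat_fderiv_sub_le) x y
    rw [integral_const_mul] at this
    exact this.trans (by gcongr)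
  · exact (norm_integral_sub_sub_matApply_le hf hint hmeas hmeas' x y).trans (by gcongr)

/-- **Cover's universal portfolio is admissible** (Lemma 3.?).
Let `S ∈ Ω_p` be a price path, let `ν` be a probability measure on a (measurable) family
`𝒵` of `C²_b` functions with `∫_𝒵 ‖f‖_{C²_b} dν(f) < ∞`.  Then the universal portfolio
`φ^ν_t := ∫_𝒵 f(S_t) dν(f)` is well defined as a Bochner integral (together with its
Gubinelli derivative `∫_𝒵 Df(S_t) dν(f)`), and `φ^ν` is an admissible strategy with
respect to `S`, with exponents `(q, r) = (p, p/2)`. -/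
theorem covers_universal_portfolio_admissible
    (d : ℕ) (p : ℝ) (hp : 2 < p) (hp' : p < 3)
    (π : PartitionSeqInf) (S : ℝ → Vec d) (II : ℝ → Mat d)
    (hS : IsPricePath p π S II)
    {Z : Type*} [MeasurableSpace Z] (ν : Measure Z) (hν : IsProbabilityMeasure ν)
    (f : Z → Vec d → Vec d)
    (hf : ∀ z, IsC2b (f z))
    (hmeas : ∀ x : Vec d, AEStronglyMeasurable (fun z => f z x) ν)
    (hmeas' : ∀ x : Vec d, AEStronglyMeasurable (fun z => clmToMat (fderiv ℝ (f z) x)) ν)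
    (hint : Integrable (fun z => c2bNorm (f z)) ν) :
    (∀ t : ℝ, Integrable (fun z => f z (S t)) ν ∧
      Integrable (fun z => clmToMat (fderiv ℝ (f z) (S t))) ν) ∧
    AdmissibleWith p π S (fun t => ∫ z, f z (S t) ∂ν) p (p / 2)
      (fun t => ∫ z, clmToMat (fderiv ℝ (f z) (S t)) ∂ν) :=
  covers_universal_portfolio_admissible_general d p hp hp' π S II hS ν f hf hmeas hmeas' hint
end
end

section
/- Let q₀ ∈ (2,3), let X : [0,T] → ℝ^d, and let w be a control function such that |X_{s,t}|^{q₀} ≤ w(s,t) for all (s,t) ∈ Δ_{[0,T]}. Then there exists a constant C depending only on q₀ such that for all points s = τ_0 < τ_1 < ⋯ < τ_N = t in [0,T]: |Σ_{i=0}^{N−1} X_{τ_i} ⊗ X_{τ_i,τ_{i+1}} − X_s ⊗ X_{s,t}| ≤ Σ_{j=2}^{N} (2 w(s,t)/(j−1))^{2/q₀} ≤ C N^{1−2/q₀} w(s,t)^{2/q₀}. If moreover n ∈ ℕ is such that |X_{τ_i,τ_{i+1}}| ≥ 2^{−n} for every 0 ≤ i ≤ N−1, then N ≤ 2^{n q₀}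 w(s,t), and consequently |Σ_{i=0}^{N−1} X_{τ_i} ⊗ X_{τ_i,τ_{i+1}} − X_s ⊗ X_{s,t}| ≤ C 2^{n(q₀−2)} w(s,t). -/
open Set Filter MeasureTheory
open scoped Topology InnerProductSpace BigOperators

noncomputable section

/-!
Deleting an interior point `τ_{i+1}` changes the left-point Riemann sum by exactly
`X_{τ_i,τ_{i+1}} ⊗ X_{τ_{i+1},τ_{i+2}}`, whose norm is at most
`(w(τ_i,τ_{i+1}) + w(τ_{i+1},τ_{i+2}))^{2/q₀}`. With `N` intervals, the `N - 1` pairs of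
adjacent intervals cover each interval at most twice, so by superadditivity some pair has total
control at most `2 w(s,t)/(N - 1)`. Deleting such a point and inducting on `N` gives the first
bound; the second is `Σ_{m<N} m^{-2/q₀} ≲ N^{1-2/q₀}` (Bernoulli's inequality telescopes). If every
increment is at least `2^{-n}`, every interval carries control at least `2^{-n q₀}`, so
`N ≤ 2^{n q₀} w(s,t)`, which turns the second bound into the third.
-/

lemma tensor_apply {d : ℕ} (a b : Vec d) (ij : Fin d × Fin d) :
    tensor a b ij = a ij.1 * b ij.2 := rfl

lemma norm_tensor {d : ℕ} (a b : Vec d) : ‖tensor a b‖ = ‖a‖ * ‖b‖ := by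
  rw [EuclideanSpace.norm_eq, EuclideanSpace.norm_eq, EuclideanSpace.norm_eq,
    ← Real.sqrt_mul (by positivity), Finset.sum_mul_sum, Fintype.sum_prod_type]
  simp only [tensor_apply, Real.norm_eq_abs, abs_mul, mul_pow]

@[simp]
lemma tensor_zero_right {d : ℕ} (a : Vec d) : tensor a 0 = 0 := by
  ext ij
  simp [tensor_apply]

lemma tensor_add_tensor_sub {d : ℕ} (x y z : Vec d) :
    tensor x (y - x) + tensor y (z - y) = tensor x (z - x) + tensor (y - x) (z - y) := by
  ext ij
  simp only [PiLp.add_apply, PiLp.sub_apply, tensor_apply]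
  ring

def leftSum {d : ℕ} (x : ℕ → Vec d) (N : ℕ) : Mat d :=
  ∑ k ∈ Finset.range N, tensor (x k) (x (k + 1) - x k)

/-- `skip p` enumerates `ℕ ∖ {p}`: precomposing a sequence of points with it deletes the
`p`-th point. -/
def skip (p k : ℕ) : ℕ := if k < p then k else k + 1

lemma skip_of_lt {p k : ℕ} (h : k < p) : skip p k = k := if_pos h

lemma skip_of_le {p k : ℕ} (h : p ≤ k) : skip p k = k + 1 := if_neg (Nat.not_lt.mpr h)

lemma skip_monotone (p : ℕ) : Monotone (skip p) := by
  intro k l hkl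
  unfold skip
  split_ifs <;> omega

lemma leftSum_skip {d : ℕ} (x : ℕ → Vec d) {i m : ℕ} (him : i ≤ m) :
    leftSum x (m + 2) = leftSum (x ∘ skip (i + 1)) (m + 1)
      + tensor (x (i + 1) - x i) (x (i + 2) - x (i + 1)) := by
  obtain ⟨j, rfl⟩ := Nat.exists_eq_add_of_le him
  have head : ∀ k ∈ Finset.range i,
      tensor (x (skip (i + 1) k)) (x (skip (i + 1) (k + 1)) - x (skip (i + 1) k))
        = tensor (x k) (x (k + 1) - x k) := by
    intro k hk
    rw [Finset.mem_range] at hk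
    rw [skip_of_lt (by omega), skip_of_lt (by omega)]
  have tail : ∀ l ∈ Finset.range j,
      tensor (x (skip (i + 1) (i + 1 + l)))
          (x (skip (i + 1) (i + 1 + l + 1)) - x (skip (i + 1) (i + 1 + l)))
        = tensor (x (i + 2 + l)) (x (i + 2 + l + 1) - x (i + 2 + l)) := by
    intro l _
    rw [skip_of_le (by omega), skip_of_le (by omega), show i + 1 + l + 1 = i + 2 + l by omega]
  simp only [leftSum, Function.comp_apply]
  rw [show i + j + 2 = i + 2 + j by omega, show i + j + 1 = i + 1 + j by omega,
    Finset.sum_range_add _ (i + 2) j, Finset.sum_range_add _ (i + 1) j,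
    Finset.sum_range_succ _ (i + 1), Finset.sum_range_succ _ i, Finset.sum_range_succ _ i,
    Finset.sum_congr rfl head, Finset.sum_congr rfl tail, skip_of_lt (by omega : i < i + 1),
    skip_of_le (le_refl (i + 1))]
  linear_combination (norm := abel) tensor_add_tensor_sub (x i) (x (i + 1)) (x (i + 2))

structure IsDiscreteControl (N : ℕ) (ω : ℕ → ℕ → ℝ) : Prop where
  nonneg : ∀ ⦃a b : ℕ⦄, a ≤ b → b ≤ N → 0 ≤ ω a b
  superadditive : ∀ ⦃a b c : ℕ⦄, a ≤ b → b ≤ c → c ≤ N → ω a b + ω b c ≤ ω a c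

namespace IsDiscreteControl

variable {N : ℕ} {ω : ℕ → ℕ → ℝ}

lemma mono (hω : IsDiscreteControl N ω) {M : ℕ} (hMN : M ≤ N) : IsDiscreteControl M ω where
  nonneg _ _ hab hb := hω.nonneg hab (hb.trans hMN)
  superadditive _ _ _ hab hbc hc := hω.superadditive hab hbc (hc.trans hMN)

lemma comp (hω : IsDiscreteControl N ω) {M : ℕ} {φ : ℕ → ℕ} (hφ : Monotone φ)
    (hφM : φ M ≤ N) : IsDiscreteControl M (fun a b => ω (φ a) (φ b)) where
  nonneg _ _ hab hb := hω.nonneg (hφ hab) ((hφ hb).trans hφM)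
  superadditive _ _ _ hab hbc hc := hω.superadditive (hφ hab) (hφ hbc) ((hφ hc).trans hφM)

lemma sum_le (hω : IsDiscreteControl N ω) : ∑ k ∈ Finset.range N, ω k (k + 1) ≤ ω 0 N := by
  induction N with
  | zero => simpa using hω.nonneg le_rfl le_rfl
  | succ n ih =>
    rw [Finset.sum_range_succ]
    linarith [ih (hω.mono n.le_succ), hω.superadditive n.zero_le n.le_succ le_rfl]

lemma card_mul_le (hω : IsDiscreteControl N ω) {ε : ℝ} (hε : ∀ k < N, ε ≤ ω k (k + 1)) :
    N * ε ≤ ω 0 N := by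
  calc (N : ℝ) * ε = ∑ _k ∈ Finset.range N, ε := by simp
    _ ≤ ∑ k ∈ Finset.range N, ω k (k + 1) :=
        Finset.sum_le_sum fun k hk => hε k (Finset.mem_range.mp hk)
    _ ≤ ω 0 N := hω.sum_le

lemma exists_adjacent_le {m : ℕ} (hω : IsDiscreteControl (m + 2) ω) :
    ∃ i ≤ m, ω i (i + 1) + ω (i + 1) (i + 2) ≤ 2 * ω 0 (m + 2) / (m + 1) := by
  set f : ℕ → ℝ := fun k => ω k (k + 1)
  have hf : ∀ k ≤ m + 1, 0 ≤ f k := fun k hk => hω.nonneg k.le_succ (by omega)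
  have hpairs : ∑ i ∈ Finset.range (m + 1), (f i + f (i + 1)) ≤ 2 * ω 0 (m + 2) := by
    have hsum : ∑ k ∈ Finset.range (m + 2), f k ≤ ω 0 (m + 2) := hω.sum_le
    rw [Finset.sum_add_distrib]
    linarith [Finset.sum_range_succ f (m + 1), Finset.sum_range_succ' f (m + 1),
      hf 0 (by omega), hf (m + 1) le_rfl]
  have haverage : ∑ i ∈ Finset.range (m + 1), (f i + f (i + 1))
      ≤ ∑ _i ∈ Finset.range (m + 1), 2 * ω 0 (m + 2) / (m + 1) := by
    rw [Finset.sum_const, Finset.card_range, nsmul_eq_mul, Nat.cast_succ,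
      mul_div_cancel₀ _ (by positivity)]
    exact hpairs
  obtain ⟨i, hi, hle⟩ := Finset.exists_le_of_sum_le ⟨0, by simp⟩ haverage
  exact ⟨i, Nat.lt_succ_iff.mp (Finset.mem_range.mp hi), hle⟩

end IsDiscreteControl

lemma monotoneOn_Iic_of_lt_succ {τ : ℕ → ℝ} {N : ℕ} (hτ : ∀ i < N, τ i < τ (i + 1)) :
    MonotoneOn τ (Set.Iic N) := by
  intro a _ b hb hab
  induction b, hab using Nat.le_induction with
  | base => exact le_rfl
  | succ n _ ih =>
    rw [Set.mem_Iic] at hb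
    exact (ih (by rw [Set.mem_Iic]; omega)).trans (hτ n (by omega)).le

lemma MonotoneOn.mem_Icc_of_le {τ : ℕ → ℝ} {N : ℕ} {T : ℝ} (hτ : MonotoneOn τ (Set.Iic N))
    (h0 : 0 ≤ τ 0) (hN : τ N ≤ T) {a : ℕ} (ha : a ≤ N) : τ a ∈ Set.Icc 0 T :=
  ⟨h0.trans (hτ (Nat.zero_le N) ha a.zero_le), (hτ ha Set.self_mem_Iic ha).trans hN⟩

lemma IsControl.isDiscreteControl {T : ℝ} {w : ℝ → ℝ → ℝ} (hw : IsControl T w) {N : ℕ}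
    {τ : ℕ → ℝ} (hτ : MonotoneOn τ (Set.Iic N)) (h0 : 0 ≤ τ 0) (hN : τ N ≤ T) :
    IsDiscreteControl N (fun a b => w (τ a) (τ b)) where
  nonneg _ _ hab hb := hw.1 (hτ.mem_Icc_of_le h0 hN (hab.trans hb)).1 (hτ (hab.trans hb) hb hab)
    (hτ.mem_Icc_of_le h0 hN hb).2
  superadditive _ _ _ hab hbc hc := hw.2 (hτ.mem_Icc_of_le h0 hN (hab.trans (hbc.trans hc))).1
    (hτ (hab.trans (hbc.trans hc)) (hbc.trans hc) hab) (hτ (hbc.trans hc) hc hbc)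
    (hτ.mem_Icc_of_le h0 hN hc).2

lemma mul_le_add_rpow_two_div {u v a b q : ℝ} (hu : 0 ≤ u) (hv : 0 ≤ v) (hq : 0 < q)
    (hua : u ^ q ≤ a) (hvb : v ^ q ≤ b) : u * v ≤ (a + b) ^ (2 / q) := by
  have ha : 0 ≤ a := (Real.rpow_nonneg hu q).trans hua
  have hb : 0 ≤ b := (Real.rpow_nonneg hv q).trans hvb
  have hu' : u ≤ (a + b) ^ q⁻¹ :=
    (Real.le_rpow_inv_iff_of_pos hu (by positivity) hq).2 (by linarith)
  have hv' : v ≤ (a + b) ^ q⁻¹ :=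
    (Real.le_rpow_inv_iff_of_pos hv (by positivity) hq).2 (by linarith)
  calc u * v ≤ (a + b) ^ q⁻¹ * (a + b) ^ q⁻¹ := mul_le_mul hu' hv' hv (by positivity)
    _ = (a + b) ^ (2 / q) := by
      rw [← Real.rpow_add' (by positivity) (by positivity)]
      congr 1
      ring

theorem IsDiscreteControl.norm_leftSum_sub_le {d N : ℕ} {q : ℝ} (hq : 0 < q) {x : ℕ → Vec d}
    {ω : ℕ → ℕ → ℝ} (hω : IsDiscreteControl N ω)
    (hx : ∀ ⦃a b : ℕ⦄, a ≤ b → b ≤ N → ‖x b - x a‖ ^ q ≤ ω a b) :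
    ‖leftSum x N - tensor (x 0) (x N - x 0)‖
      ≤ ∑ j ∈ Finset.Icc 2 N, (2 * ω 0 N / ((j : ℝ) - 1)) ^ (2 / q) := by
  induction N generalizing x ω with
  | zero => simp [leftSum]
  | succ N ih =>
    rcases N with _ | m
    · simp [leftSum]
    obtain ⟨i, him, hi⟩ := hω.exists_adjacent_le
    have hskip_zero : skip (i + 1) 0 = 0 := skip_of_lt i.succ_pos
    have hskip_last : skip (i + 1) (m + 1) = m + 2 := skip_of_le (by omega)
    have hφ := skip_monotone (i + 1)
    have hsewn := ih (hω.comp hφ hskip_last.le) fun a b hab hb =>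
      hx (hφ hab) ((hφ hb).trans hskip_last.le)
    simp only [hskip_zero, hskip_last] at hsewn
    have hremoved : ‖tensor (x (i + 1) - x i) (x (i + 2) - x (i + 1))‖
        ≤ (2 * ω 0 (m + 2) / (m + 1)) ^ (2 / q) := by
      rw [norm_tensor]
      refine (mul_le_add_rpow_two_div (norm_nonneg _) (norm_nonneg _) hq
        (hx i.le_succ (by omega)) (hx (i + 1).le_succ (by omega))).trans ?_
      have h₁ := hω.nonneg i.le_succ (by omega : i + 1 ≤ m + 2)
      have h₂ := hω.nonneg (Nat.le_succ (i + 1)) (by omega : i + 2 ≤ m + 2)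
      exact Real.rpow_le_rpow (by linarith) hi (by positivity)
    show ‖leftSum x (m + 2) - tensor (x 0) (x (m + 2) - x 0)‖
      ≤ ∑ j ∈ Finset.Icc 2 (m + 1 + 1), (2 * ω 0 (m + 2) / ((j : ℝ) - 1)) ^ (2 / q)
    rw [Finset.sum_Icc_succ_top (by omega), leftSum_skip x him]
    calc ‖leftSum (x ∘ skip (i + 1)) (m + 1) + tensor (x (i + 1) - x i) (x (i + 2) - x (i + 1))
          - tensor (x 0) (x (m + 2) - x 0)‖
        ≤ ‖leftSum (fun k => x (skip (i + 1) k)) (m + 1) - tensor (x 0) (x (m + 2) - x 0)‖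
          + ‖tensor (x (i + 1) - x i) (x (i + 2) - x (i + 1))‖ := by
          rw [add_sub_right_comm]
          exact norm_add_le _ _
      _ ≤ _ := by
          rw [show ((m + 1 + 1 : ℕ) : ℝ) - 1 = m + 1 by push_cast; ring]
          exact add_le_add hsewn hremoved

/-- Bernoulli's inequality `(1 - 1/m)^p ≤ 1 - p/m`, multiplied by `m^p`. -/
lemma mul_rpow_sub_one_le_rpow_sub_rpow {p m : ℝ} (hp0 : 0 ≤ p) (hp1 : p ≤ 1) (hm : 1 ≤ m) :
    p * m ^ (p - 1) ≤ m ^ p - (m - 1) ^ p := by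
  have hm0 : 0 < m := by linarith
  have hinv : m⁻¹ ≤ 1 := inv_le_one_of_one_le₀ hm
  have hbernoulli := rpow_one_add_le_one_add_mul_self (s := -m⁻¹) (by linarith) hp0 hp1
  have hfactor : (m - 1) ^ p = m ^ p * (1 + -m⁻¹) ^ p := by
    rw [← Real.mul_rpow hm0.le (by linarith)]
    congr 1
    field_simp
    ring
  rw [hfactor, Real.rpow_sub_one hm0.ne']
  linear_combination mul_le_mul_of_nonneg_left hbernoulli (Real.rpow_nonneg hm0.le p)

lemma mul_sum_Icc_two_rpow_le {p : ℝ} (hp0 : 0 < p) (hp1 : p ≤ 1) (N : ℕ) :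
    p * ∑ j ∈ Finset.Icc 2 N, ((j : ℝ) - 1) ^ (p - 1) ≤ (N : ℝ) ^ p := by
  have key : ∀ n : ℕ, p * ∑ j ∈ Finset.Icc 2 (n + 1), ((j : ℝ) - 1) ^ (p - 1) ≤ (n : ℝ) ^ p := by
    intro n
    induction n with
    | zero => simp [Real.zero_rpow hp0.ne']
    | succ n ih =>
      rw [Finset.sum_Icc_succ_top (by omega), mul_add]
      have hstep := mul_rpow_sub_one_le_rpow_sub_rpow hp0.le hp1 (by linarith : (1 : ℝ) ≤ n + 1)
      push_cast at hstep ⊢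
      rw [show (n : ℝ) + 1 + 1 - 1 = n + 1 by ring]
      rw [add_sub_cancel_right] at hstep
      linarith
  rcases N with _ | n
  · simp [Real.zero_rpow hp0.ne']
  · exact (key n).trans (Real.rpow_le_rpow n.cast_nonneg (by simp) hp0.le)

lemma sum_Icc_two_div_rpow_le {W a : ℝ} (hW : 0 ≤ W) (ha0 : 0 < a) (ha1 : a < 1) (N : ℕ) :
    ∑ j ∈ Finset.Icc 2 N, (2 * W / ((j : ℝ) - 1)) ^ a
      ≤ 2 ^ a / (1 - a) * (N : ℝ) ^ (1 - a) * W ^ a := by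
  have hterm : ∀ j ∈ Finset.Icc 2 N,
      (2 * W / ((j : ℝ) - 1)) ^ a = (2 * W) ^ a * ((j : ℝ) - 1) ^ ((1 - a) - 1) := by
    intro j hj
    have hj : (1 : ℝ) < j := by exact_mod_cast (Finset.mem_Icc.mp hj).1
    rw [Real.div_rpow (by positivity) (by linarith), sub_sub_cancel_left,
      Real.rpow_neg (by linarith), div_eq_mul_inv]
  have hsum := mul_sum_Icc_two_rpow_le (p := 1 - a) (by linarith) (by linarith) N
  rw [Finset.sum_congr rfl hterm, ← Finset.mul_sum, Real.mul_rpow zero_le_two hW,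
    div_mul_eq_mul_div, div_mul_eq_mul_div, le_div_iff₀ (by linarith)]
  have h2W : 0 ≤ 2 ^ a * W ^ a := by positivity
  nlinarith [mul_le_mul_of_nonneg_left hsum h2W]

lemma rpow_one_sub_mul_rpow_le {N M W a : ℝ} (hN : 0 ≤ N) (hM : 0 ≤ M) (hW : 0 ≤ W)
    (ha : a ≤ 1) (hNM : N ≤ M * W) : N ^ (1 - a) * W ^ a ≤ M ^ (1 - a) * W := by
  calc N ^ (1 - a) * W ^ a ≤ (M * W) ^ (1 - a) * W ^ a := by gcongr
    _ = M ^ (1 - a) * W := by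
        rw [Real.mul_rpow hM hW, mul_assoc, ← Real.rpow_add' hW (by norm_num), sub_add_cancel,
          Real.rpow_one]

theorem discrete_sewing_bound_general
    (q₀ : ℝ) (hq₀ : 2 < q₀) :
    ∃ C : ℝ, 0 < C ∧
      ∀ (d : ℕ) (T : ℝ), 0 < T →
      ∀ (X : ℝ → Vec d) (w : ℝ → ℝ → ℝ),
        IsControl T w →
        (∀ ⦃s t : ℝ⦄, 0 ≤ s → s ≤ t → t ≤ T → ‖X t - X s‖ ^ q₀ ≤ w s t) →
        ∀ (N : ℕ) (τ : ℕ → ℝ), 0 < N → 0 ≤ τ 0 → τ N ≤ T →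
          (∀ i < N, τ i < τ (i + 1)) →
          (‖(∑ i ∈ Finset.range N, tensor (X (τ i)) (X (τ (i + 1)) - X (τ i)))
              - tensor (X (τ 0)) (X (τ N) - X (τ 0))‖
            ≤ ∑ j ∈ Finset.Icc 2 N, (2 * w (τ 0) (τ N) / ((j : ℝ) - 1)) ^ (2 / q₀)) ∧
          ((∑ j ∈ Finset.Icc 2 N, (2 * w (τ 0) (τ N) / ((j : ℝ) - 1)) ^ (2 / q₀))
            ≤ C * (N : ℝ) ^ (1 - 2 / q₀) * w (τ 0) (τ N) ^ (2 / q₀)) ∧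
          ∀ n : ℕ, (∀ i < N, (2 : ℝ) ^ (-(n : ℝ)) ≤ ‖X (τ (i + 1)) - X (τ i)‖) →
            ((N : ℝ) ≤ 2 ^ ((n : ℝ) * q₀) * w (τ 0) (τ N) ∧
              ‖(∑ i ∈ Finset.range N, tensor (X (τ i)) (X (τ (i + 1)) - X (τ i)))
                  - tensor (X (τ 0)) (X (τ N) - X (τ 0))‖
                ≤ C * 2 ^ ((n : ℝ) * (q₀ - 2)) * w (τ 0) (τ N)) := by
  have hq : 0 < q₀ := by linarith
  have ha : 2 / q₀ < 1 := (div_lt_one hq).2 hq₀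
  refine ⟨2 ^ (2 / q₀) / (1 - 2 / q₀), div_pos (by positivity) (by linarith), ?_⟩
  intro d T _ X w hw hX N τ _ h0 hN hτ
  have hτ_mono := monotoneOn_Iic_of_lt_succ hτ
  have hω := hw.isDiscreteControl hτ_mono h0 hN
  have hXω : ∀ ⦃a b : ℕ⦄, a ≤ b → b ≤ N → ‖X (τ b) - X (τ a)‖ ^ q₀ ≤ w (τ a) (τ b) :=
    fun a b hab hb => hX (hτ_mono.mem_Icc_of_le h0 hN (hab.trans hb)).1
      (hτ_mono (hab.trans hb) hb hab) (hτ_mono.mem_Icc_of_le h0 hN hb).2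
  have hW : 0 ≤ w (τ 0) (τ N) := hω.nonneg N.zero_le le_rfl
  have hsewing := hω.norm_leftSum_sub_le (x := X ∘ τ) hq hXω
  have hsum := sum_Icc_two_div_rpow_le hW (by positivity) ha N
  refine ⟨hsewing, hsum, fun n hn => ?_⟩
  have hcount : (N : ℝ) * 2 ^ (-((n : ℝ) * q₀)) ≤ w (τ 0) (τ N) := hω.card_mul_le fun i hi =>
    calc (2 : ℝ) ^ (-((n : ℝ) * q₀)) = (2 ^ (-(n : ℝ))) ^ q₀ := by
          rw [← Real.rpow_mul zero_le_two, neg_mul]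
      _ ≤ ‖X (τ (i + 1)) - X (τ i)‖ ^ q₀ := Real.rpow_le_rpow (by positivity) (hn i hi) hq.le
      _ ≤ w (τ i) (τ (i + 1)) := hXω i.le_succ hi
  have hN_le : (N : ℝ) ≤ 2 ^ ((n : ℝ) * q₀) * w (τ 0) (τ N) := by
    rwa [Real.rpow_neg zero_le_two, ← div_eq_mul_inv, div_le_iff₀ (by positivity), mul_comm]
      at hcount
  refine ⟨hN_le, hsewing.trans (hsum.trans ?_)⟩
  have hpow := rpow_one_sub_mul_rpow_le N.cast_nonneg (by positivity) hW ha.le hN_le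
  rw [← Real.rpow_mul zero_le_two, show (n : ℝ) * q₀ * (1 - 2 / q₀) = n * (q₀ - 2) by
    field_simp] at hpow
  rw [mul_assoc, mul_assoc]
  gcongr

/-- **Discrete sewing bound for the left-point Riemann sums** (Step 2 of the proof of
Proposition 4.?).  If `|X_{s,t}|^{q₀} ≤ w(s,t)` for a control `w`, then for any points
`s = τ_0 < τ_1 < ⋯ < τ_N = t` in `[0,T]`, the left-point Riemann sum satisfies
`|Σ_i X_{τ_i} ⊗ X_{τ_i,τ_{i+1}} − X_s ⊗ X_{s,t}| ≤ Σ_{j=2}^N (2w(s,t)/(j−1))^{2/q₀}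
  ≤ C N^{1−2/q₀} w(s,t)^{2/q₀}`
with `C` depending only on `q₀`; and if all increments satisfy `|X_{τ_i,τ_{i+1}}| ≥ 2^{−n}`
then `N ≤ 2^{n q₀} w(s,t)` and the sum is bounded by `C 2^{n(q₀−2)} w(s,t)`. -/
theorem discrete_sewing_bound
    (q₀ : ℝ) (hq₀ : 2 < q₀) (hq₀' : q₀ < 3) :
    ∃ C : ℝ, 0 < C ∧
      ∀ (d : ℕ) (T : ℝ), 0 < T →
      ∀ (X : ℝ → Vec d) (w : ℝ → ℝ → ℝ),
        IsControl T w →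
        (∀ ⦃s t : ℝ⦄, 0 ≤ s → s ≤ t → t ≤ T → ‖X t - X s‖ ^ q₀ ≤ w s t) →
        ∀ (N : ℕ) (τ : ℕ → ℝ), 0 < N → 0 ≤ τ 0 → τ N ≤ T →
          (∀ i < N, τ i < τ (i + 1)) →
          (‖(∑ i ∈ Finset.range N, tensor (X (τ i)) (X (τ (i + 1)) - X (τ i)))
              - tensor (X (τ 0)) (X (τ N) - X (τ 0))‖
            ≤ ∑ j ∈ Finset.Icc 2 N, (2 * w (τ 0) (τ N) / ((j : ℝ) - 1)) ^ (2 / q₀)) ∧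
          ((∑ j ∈ Finset.Icc 2 N, (2 * w (τ 0) (τ N) / ((j : ℝ) - 1)) ^ (2 / q₀))
            ≤ C * (N : ℝ) ^ (1 - 2 / q₀) * w (τ 0) (τ N) ^ (2 / q₀)) ∧
          ∀ n : ℕ, (∀ i < N, (2 : ℝ) ^ (-(n : ℝ)) ≤ ‖X (τ (i + 1)) - X (τ i)‖) →
            ((N : ℝ) ≤ 2 ^ ((n : ℝ) * q₀) * w (τ 0) (τ N) ∧
              ‖(∑ i ∈ Finset.range N, tensor (X (τ i)) (X (τ (i + 1)) - X (τ i)))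
                  - tensor (X (τ 0)) (X (τ N) - X (τ 0))‖
                ≤ C * 2 ^ ((n : ℝ) * (q₀ - 2)) * w (τ 0) (τ N)) :=
  discrete_sewing_bound_general q₀ hq₀
end
end
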